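/- Let m ≥ 2, let d ∈ V, set ε = +1 if ϑ_0(d) = 0 and ε = −1 if ϑ_0(d) = 1, and let X = {x ∈ V : ϑ_d(x) = 1}. Then for all distinct a, b ∈ X, the number of elements x ∈ X with x ≠ a, x ≠ b and ⟨a,b⟩ + ⟨a,x⟩ + ⟨b,x⟩ = 0 equals 2^{2m−2} − ε·2^{m−1} − 2. (That is, the two-graph 𝒳^ε_{2m} on X whose triples are those satisfying ⟨a,b⟩+⟨a,c⟩+⟨b,c⟩ = 0 is a regular two-graph of degree 2^{2m−2} − ε·2^{m−1} − 2.) -/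

import Mathlib

open Finset

/-- The symplectic bilinear form `⟨u,v⟩ = ∑_{i<m} (u_i v_{m+i} + u_{m+i} v_i)` on `(F_2)^{2m}`. -/
def symp (m : ℕ) (u v : Fin (2*m) → ZMod 2) : ZMod 2 :=
  ∑ i : Fin m, (u ⟨i.1, by omega⟩ * v ⟨m + i.1, by omega⟩ +
    u ⟨m + i.1, by omega⟩ * v ⟨i.1, by omega⟩)

/-- The quadratic form `ϑ_0(u) = ∑_{i<m} u_i u_{m+i}`. -/
def th0 (m : ℕ) (u : Fin (2*m) → ZMod 2) : ZMod 2 :=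
  ∑ i : Fin m, u ⟨i.1, by omega⟩ * u ⟨m + i.1, by omega⟩

/-- The quadratic form `ϑ_a(u) = ϑ_0(u) + ⟨a,u⟩`. -/
def th (m : ℕ) (a u : Fin (2*m) → ZMod 2) : ZMod 2 :=
  th0 m u + symp m a u

/-!
Put `c = a + b`. Polarising `ϑ_d` gives `⟨a,b⟩ + ⟨a,x⟩ + ⟨b,x⟩ = ϑ_d(x + c) + ϑ_d(x)`, so on
`X` the triple condition says `x + c ∈ X`, and the count is `|X ∩ (X - c)| - 2`.
Inclusion–exclusion expresses `|X ∩ (X - c)|` through `|X|` and `#{x | ϑ_d(x) = ϑ_d(x + c)}`.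
The latter set is a fibre of the nonzero functional `⟨c, ·⟩`, hence has `2^{2m-1}` elements.
Since `ϑ_d(y + d) = ϑ_0(y) + ϑ_0(d)`, `X` is a translate of a level set of `ϑ_0`, which in the
coordinates `u = (x_i)_{i<m}`, `v = (x_{m+i})_{i<m}` is the dot product `u ⬝ᵥ v`; it vanishes at
`2^{2m-1} + 2^{m-1}` points.
-/

lemma ZMod.ne_zero_iff_eq_one_mod_two (x : ZMod 2) : x ≠ 0 ↔ x = 1 := by
  revert x; decide

/-- Pointwise `2 [P ∧ P'] + 1 = [P ↔ P'] + [P] + [P']`, and `#{P ∘ σ} = #{P}`. -/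
lemma two_mul_card_filter_and_comp_add_card {α : Type*} [Fintype α] (P : α → Prop)
    [DecidablePred P] (σ : Equiv.Perm α) :
    2 * #{x | P x ∧ P (σ x)} + Fintype.card α = #{x | P x ↔ P (σ x)} + 2 * #{x | P x} := by
  have hσ : #{x | P (σ x)} = #{x | P x} := card_equiv σ (by simp)
  rw [two_mul, two_mul]
  nth_rewrite 2 [← hσ]
  simp only [card_filter]
  rw [← card_univ, card_eq_sum_ones]
  simp only [← sum_add_distrib]
  refine sum_congr rfl fun x _ => ?_
  by_cases P x <;> by_cases P (σ x) <;> simp [*]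

lemma ZMod.card_filter_eq_one_mod_two {α : Type*} [Fintype α] (f : α → ZMod 2) :
    #{x | f x = 1} = Fintype.card α - #{x | f x = 0} := by
  rw [← card_univ, ← card_filter_add_card_filter_not (s := univ) (fun x => f x = 0)]
  simp only [ZMod.ne_zero_iff_eq_one_mod_two, Nat.add_sub_cancel_left]

namespace AddMonoidHom

variable {G : Type*} [AddGroup G]

lemma card_fiber_mul_card_of_surjective [Fintype G] {M : Type*} [AddMonoid M] [Fintype M]
    [DecidableEq M] (f : G →+ M) (hf : Function.Surjective f) (y : M) :
    #{g | f g = y} * Fintype.card M = Fintype.card G := by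
  calc #{g | f g = y} * Fintype.card M = ∑ z : M, #{g | f g = z} := by
        rw [sum_congr rfl fun z _ => card_fiber_eq_of_mem_range f (hf z) (hf y), sum_const,
          card_univ, smul_eq_mul, mul_comm]
    _ = Fintype.card G := (card_eq_sum_card_fiberwise (fun g _ => mem_univ (f g))).symm

lemma surjective_of_ne_zero_mod_two (f : G →+ ZMod 2) (hf : f ≠ 0) :
    Function.Surjective f := by
  obtain ⟨g, hg⟩ := DFunLike.ne_iff.mp hf
  intro y
  by_cases hy : y = 0
  · exact ⟨0, by rw [hy, map_zero]⟩
  · rw [AddMonoidHom.zero_apply, ZMod.ne_zero_iff_eq_one_mod_two] at hg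
    rw [← ne_eq, ZMod.ne_zero_iff_eq_one_mod_two] at hy
    exact ⟨g, by rw [hg, hy]⟩

end AddMonoidHom

section DotProduct

variable {ι K : Type*} [Fintype ι] [DecidableEq ι] [Field K]

lemma dotProduct_left_surjective {u : ι → K} (hu : u ≠ 0) :
    Function.Surjective (u ⬝ᵥ ·) := by
  obtain ⟨i, hi⟩ := Function.ne_iff.mp hu
  intro z
  exact ⟨Pi.single i ((u i)⁻¹ * z),
    by simp [dotProduct_single, ← mul_assoc, mul_inv_cancel₀ hi]⟩

/-- With `q = card K` and `n = card ι`: for `u ≠ 0` the equation `u ⬝ᵥ v = 0` has `q ^ (n - 1)`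
solutions `v`, for `u = 0` it has `q ^ n`. -/
lemma card_dotProduct_eq_zero_mul_card [Fintype K] [DecidableEq K] :
    (#{p : (ι → K) × (ι → K) | p.1 ⬝ᵥ p.2 = 0} : ℤ) * Fintype.card K
      = Fintype.card K ^ (2 * Fintype.card ι)
        + (Fintype.card K - 1) * Fintype.card K ^ Fintype.card ι := by
  have hfiber (u : ι → K) (hu : u ≠ 0) :
      (#{v | u ⬝ᵥ v = 0} : ℤ) * Fintype.card K = Fintype.card K ^ Fintype.card ι := by
    norm_cast
    rw [← Fintype.card_fun]
    exact (AddMonoidHom.mk' (u ⬝ᵥ ·) (dotProduct_add u)).card_fiber_mul_card_of_surjective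
      (dotProduct_left_surjective hu) 0
  have hsum :
      #{p : (ι → K) × (ι → K) | p.1 ⬝ᵥ p.2 = 0} = ∑ u : ι → K, #{v | u ⬝ᵥ v = 0} := by
    simp only [card_filter]
    exact Fintype.sum_prod_type _
  have hcompl : (#({0}ᶜ : Finset (ι → K)) : ℤ) = Fintype.card K ^ Fintype.card ι - 1 := by
    rw [card_compl, card_singleton, Fintype.card_fun,
      Nat.cast_sub (Nat.one_le_pow _ _ Fintype.card_pos)]
    push_cast; rfl
  rw [hsum, Fintype.sum_eq_add_sum_compl 0]
  push_cast
  rw [add_mul, sum_mul, sum_congr rfl fun u hu => hfiber u (by simpa using hu),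
    sum_const, nsmul_eq_mul, hcompl]
  simp only [zero_dotProduct, filter_true, card_univ, Fintype.card_pi, prod_const, Nat.cast_pow]
  ring

end DotProduct

def halves (m : ℕ) {α : Type*} (x : Fin (2*m) → α) : (Fin m → α) × (Fin m → α) :=
  (fun i => x ⟨i, by omega⟩, fun i => x ⟨m + i, by omega⟩)

variable {m : ℕ}

lemma halves_injective {α : Type*} : Function.Injective (halves m (α := α)) := by
  intro x y h
  funext j
  by_cases hj : j.1 < m
  · exact congrFun (congrArg Prod.fst h) ⟨j, hj⟩
  · have := congrFun (congrArg Prod.snd h) ⟨j - m, by omega⟩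
    simpa [halves, Nat.add_sub_cancel' (not_lt.mp hj)] using this

lemma halves_bijective {α : Type*} [Fintype α] : Function.Bijective (halves m (α := α)) :=
  (Fintype.bijective_iff_injective_and_card _).mpr
    ⟨halves_injective, by simp [two_mul, pow_add]⟩

lemma halves_add {α : Type*} [Add α] (x y : Fin (2*m) → α) :
    halves m (x + y) = halves m x + halves m y :=
  rfl

lemma th0_eq_dotProduct (x : Fin (2*m) → ZMod 2) :
    th0 m x = (halves m x).1 ⬝ᵥ (halves m x).2 :=
  rfl

lemma symp_eq_dotProduct (x y : Fin (2*m) → ZMod 2) :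
    symp m x y = (halves m x).1 ⬝ᵥ (halves m y).2 + (halves m x).2 ⬝ᵥ (halves m y).1 :=
  sum_add_distrib

lemma symp_comm (x y : Fin (2*m) → ZMod 2) : symp m x y = symp m y x := by
  rw [symp_eq_dotProduct, symp_eq_dotProduct, dotProduct_comm, add_comm, dotProduct_comm]

lemma symp_add_right (x y z : Fin (2*m) → ZMod 2) :
    symp m x (y + z) = symp m x y + symp m x z := by
  simp only [symp_eq_dotProduct, halves_add, Prod.fst_add, Prod.snd_add, dotProduct_add]
  ring

lemma symp_self (x : Fin (2*m) → ZMod 2) : symp m x x = 0 := by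
  rw [symp_eq_dotProduct, dotProduct_comm]
  exact CharTwo.add_self_eq_zero _

lemma th0_add (x y : Fin (2*m) → ZMod 2) : th0 m (x + y) = th0 m x + th0 m y + symp m x y := by
  simp only [th0_eq_dotProduct, symp_eq_dotProduct, halves_add, Prod.fst_add, Prod.snd_add,
    dotProduct_add, add_dotProduct]
  rw [dotProduct_comm (halves m y).1]
  ring

lemma th_add (d x y : Fin (2*m) → ZMod 2) :
    th m d (x + y) = th m d x + th m d y + symp m x y := by
  simp only [th, th0_add, symp_add_right]
  ring

lemma th_add_self (d y : Fin (2*m) → ZMod 2) : th m d (y + d) = th0 m y + th0 m d := by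
  rw [th_add, th, th, symp_self, symp_comm y d]
  grind

lemma eq_zero_of_forall_symp_eq_zero {c : Fin (2*m) → ZMod 2} (hc : ∀ y, symp m c y = 0) :
    c = 0 := by
  have hpre (p : (Fin m → ZMod 2) × (Fin m → ZMod 2)) : ∃ y, halves m y = p :=
    halves_bijective.surjective p
  apply halves_injective
  refine Prod.ext (dotProduct_eq_zero_iff.mp fun v => ?_) (dotProduct_eq_zero_iff.mp fun v => ?_)
  · obtain ⟨y, hy⟩ := hpre (0, v)
    simpa [symp_eq_dotProduct, hy] using hc y
  · obtain ⟨y, hy⟩ := hpre (v, 0)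
    simpa [symp_eq_dotProduct, hy] using hc y

lemma card_th0_mul_two (τ : ZMod 2) :
    (#{y | th0 m y = τ} : ℤ) * 2 = 2 ^ (2 * m) + (if τ = 0 then 1 else -1) * 2 ^ m := by
  have hzero : (#{y | th0 m y = 0} : ℤ) * 2 = 2 ^ (2 * m) + 2 ^ m := by
    have hmem (y : Fin (2*m) → ZMod 2) :
        y ∈ ({y | th0 m y = 0} : Finset _) ↔
          halves m y ∈ ({p | p.1 ⬝ᵥ p.2 = 0} : Finset _) := by
      simp only [mem_filter, mem_univ, true_and]
      rfl
    rw [card_equiv (Equiv.ofBijective _ halves_bijective) hmem]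
    simpa using card_dotProduct_eq_zero_mul_card (ι := Fin m) (K := ZMod 2)
  by_cases hτ : τ = 0
  · simpa [hτ] using hzero
  · rw [← ne_eq, ZMod.ne_zero_iff_eq_one_mod_two] at hτ
    rw [hτ, ZMod.card_filter_eq_one_mod_two, Nat.cast_sub (card_le_univ _)]
    simp only [Fintype.card_pi, ZMod.card, prod_const, card_univ, Fintype.card_fin, Nat.cast_pow,
      Nat.cast_ofNat, one_ne_zero, ↓reduceIte, Int.reduceNeg, neg_mul, one_mul]
    linarith

lemma card_th_eq_one_mul_two (d : Fin (2*m) → ZMod 2) :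
    (#{y | th m d y = 1} : ℤ) * 2 = 2 ^ (2 * m) - (if th0 m d = 0 then 1 else -1) * 2 ^ m := by
  have hmem (y : Fin (2*m) → ZMod 2) :
      y ∈ ({y | th0 m y = th0 m d + 1} : Finset _) ↔ y + d ∈ ({y | th m d y = 1} : Finset _) := by
    simp only [mem_filter, mem_univ, true_and, th_add_self]
    grind
  rw [← card_equiv (Equiv.addRight d) hmem, card_th0_mul_two]
  obtain h | h := (em (th0 m d = 0)).imp_right (ZMod.ne_zero_iff_eq_one_mod_two _).mp
  · simp only [h, zero_add, one_ne_zero, ↓reduceIte, Int.reduceNeg, neg_mul, one_mul]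
    ring
  · simp [h, show (1 + 1 : ZMod 2) = 0 from rfl]

lemma card_th_eq_one_iff_th_add_eq_one_mul_two {c : Fin (2*m) → ZMod 2} (hc : c ≠ 0)
    (d : Fin (2*m) → ZMod 2) :
    #{y | th m d y = 1 ↔ th m d (y + c) = 1} * 2 = 2 ^ (2 * m) := by
  have hne : AddMonoidHom.mk' (symp m c) (symp_add_right c) ≠ 0 := fun h =>
    hc (eq_zero_of_forall_symp_eq_zero fun y => DFunLike.congr_fun h y)
  have hmem (y : Fin (2*m) → ZMod 2) :
      (th m d y = 1 ↔ th m d (y + c) = 1) ↔ symp m c y = th m d c := by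
    rw [th_add, symp_comm y c]
    generalize th m d y = A, th m d c = B, symp m c y = S
    revert A B S; decide
  have hfiber := (AddMonoidHom.mk' (symp m c) (symp_add_right c)).card_fiber_mul_card_of_surjective
    (AddMonoidHom.surjective_of_ne_zero_mod_two _ hne) (th m d c)
  rw [filter_congr fun y _ => hmem y]
  simpa using hfiber

lemma symp_add_symp_add_symp {d a b : Fin (2*m) → ZMod 2} (ha : th m d a = 1) (hb : th m d b = 1)
    (x : Fin (2*m) → ZMod 2) :
    symp m a b + symp m a x + symp m b x = th m d (x + (a + b)) + th m d x := by
  rw [th_add, th_add, ha, hb, symp_add_right, symp_comm x a, symp_comm x b]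
  grind

lemma pair_subset_filter_th_add {d a b : Fin (2*m) → ZMod 2} (ha : th m d a = 1)
    (hb : th m d b = 1) :
    {a, b} ⊆ ({x | th m d x = 1 ∧ th m d (x + (a + b)) = 1} : Finset _) := by
  intro x hx
  simp only [mem_filter, mem_univ, true_and]
  rcases mem_insert.mp hx with rfl | hx
  · rw [← add_assoc, ZModModule.add_self, zero_add]; exact ⟨ha, hb⟩
  · rw [mem_singleton.mp hx, add_comm a b, ← add_assoc, ZModModule.add_self, zero_add]
    exact ⟨hb, ha⟩

lemma natCard_symp_add_symp_add_symp_eq_zero_add_two {d a b : Fin (2*m) → ZMod 2}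
    (ha : th m d a = 1) (hb : th m d b = 1) (hab : a ≠ b) :
    Nat.card {x : Fin (2*m) → ZMod 2 //
        th m d x = 1 ∧ x ≠ a ∧ x ≠ b ∧ symp m a b + symp m a x + symp m b x = 0} + 2
      = #{x | th m d x = 1 ∧ th m d (x + (a + b)) = 1} := by
  rw [← card_sdiff_add_card_eq_card (pair_subset_filter_th_add ha hb), card_pair hab,
    Nat.card_eq_fintype_card, Fintype.card_subtype]
  congr 2
  ext x
  simp only [mem_sdiff, mem_filter, mem_univ, true_and, mem_insert, mem_singleton,
    symp_add_symp_add_symp ha hb]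
  grind

lemma card_th_eq_one_and_th_add_eq_one_mul_four {c : Fin (2*m) → ZMod 2} (hc : c ≠ 0)
    (d : Fin (2*m) → ZMod 2) :
    (#{x | th m d x = 1 ∧ th m d (x + c) = 1} : ℤ) * 4
      = 2 ^ (2 * m) - 2 * (if th0 m d = 0 then 1 else -1) * 2 ^ m := by
  have hpair : 2 * #{x | th m d x = 1 ∧ th m d (x + c) = 1} + 2 ^ (2 * m)
      = #{x | th m d x = 1 ↔ th m d (x + c) = 1} + 2 * #{x | th m d x = 1} := by
    have := two_mul_card_filter_and_comp_add_card (th m d · = 1) (Equiv.addRight c)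
    simp only [Equiv.coe_addRight, Fintype.card_fun, ZMod.card, Fintype.card_fin] at this
    exact this
  have hE := card_th_eq_one_iff_th_add_eq_one_mul_two hc d
  have hZ := card_th_eq_one_mul_two d
  zify at hpair hE
  linarith

theorem stmt_9_general (m : ℕ) (d : Fin (2*m) → ZMod 2)
    (a b : Fin (2*m) → ZMod 2) (ha : th m d a = 1) (hb : th m d b = 1) (hab : a ≠ b) :
    let ε : ℤ := if th0 m d = 0 then 1 else -1
    (Nat.card {x : Fin (2*m) → ZMod 2 //
        th m d x = 1 ∧ x ≠ a ∧ x ≠ b ∧ symp m a b + symp m a x + symp m b x = 0} : ℤ)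
      = 2^(2*m - 2) - ε * 2^(m - 1) - 2 := by
  dsimp only
  have hm : 0 < m := Nat.pos_of_ne_zero fun h0 => hab (funext fun i => absurd i.2 (by omega))
  have hc : a + b ≠ 0 := by rwa [← ZModModule.sub_eq_add, sub_ne_zero]
  have hF := natCard_symp_add_symp_add_symp_eq_zero_add_two ha hb hab
  have hN := card_th_eq_one_and_th_add_eq_one_mul_four hc d
  have h4 : 4 * (2 : ℤ) ^ (2 * m - 2) = 2 ^ (2 * m) := by
    rw [show (4 : ℤ) = 2 ^ 2 by norm_num, ← pow_add]; congr 1; omega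
  have h2 : 2 * (2 : ℤ) ^ (m - 1) = 2 ^ m := by
    rw [← pow_succ', Nat.sub_add_cancel hm]
  rw [← h4, ← h2] at hN
  zify at hF
  linarith

/-- The two-graph `𝒳^ε_{2m}` on `X = {x : ϑ_d(x) = 1}` with triples
`⟨a,b⟩+⟨a,c⟩+⟨b,c⟩ = 0` is regular of degree `2^{2m-2} - ε 2^{m-1} - 2`. -/
theorem stmt_9 (m : ℕ) (hm : 2 ≤ m) (d : Fin (2*m) → ZMod 2)
    (a b : Fin (2*m) → ZMod 2) (ha : th m d a = 1) (hb : th m d b = 1) (hab : a ≠ b) :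
    let ε : ℤ := if th0 m d = 0 then 1 else -1
    (Nat.card {x : Fin (2*m) → ZMod 2 //
        th m d x = 1 ∧ x ≠ a ∧ x ≠ b ∧ symp m a b + symp m a x + symp m b x = 0} : ℤ)
      = 2^(2*m - 2) - ε * 2^(m - 1) - 2 :=
  stmt_9_general m d a b ha hb hab
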